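/- arXiv:1006.1358 — 3 statements merged into one kernel-verified Lean document; each statement's English description precedes it below -/
import Mathlib

section
/- Let Δ be a Hermitian matrix with positive and negative parts Δ₊ and Δ₋ (positive semidefinite matrices with disjoint supports, Δ = Δ₊ − Δ₋). If E is a trace-preserving positive linear map on matrices such that ‖E(Δ)‖₁ = ‖Δ‖₁ (where ‖·‖₁ is the trace norm), then E(Δ₊) and E(Δ₋) have disjoint (orthogonal) supports. -/
open Matrix
open scoped ComplexOrder

/-- The positive semidefinite square root, as `Matrix.PosSemidef.sqrt` was defined in older
Mathlib (removed since). -/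
noncomputable def Matrix.PosSemidef.sqrt {n : Type*} [Fintype n] [DecidableEq n]
    {A : Matrix n n ℂ} (hA : A.PosSemidef) : Matrix n n ℂ :=
  hA.isHermitian.eigenvectorUnitary.1 * diagonal ((↑) ∘ (√·) ∘ hA.isHermitian.eigenvalues) *
  (star hA.isHermitian.eigenvectorUnitary : Matrix n n ℂ)

/-- The trace norm `‖A‖₁ = Tr √(Aᴴ A)` of a complex matrix. -/
noncomputable def traceNorm {n : ℕ} (A : Matrix (Fin n) (Fin n) ℂ) : ℝ :=
  ((Matrix.posSemidef_conjTranspose_mul_self A).sqrt.trace).re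

/-- A trace-preserving linear map. -/
def TracePreserving {n : ℕ}
    (E : Matrix (Fin n) (Fin n) ℂ →ₗ[ℂ] Matrix (Fin n) (Fin n) ℂ) : Prop :=
  ∀ X, (E X).trace = X.trace

/-- A positive map: sends PSD matrices to PSD matrices. -/
def PositiveMap {n : ℕ}
    (E : Matrix (Fin n) (Fin n) ℂ →ₗ[ℂ] Matrix (Fin n) (Fin n) ℂ) : Prop :=
  ∀ X : Matrix (Fin n) (Fin n) ℂ, X.PosSemidef → (E X).PosSemidef

/-!
If `P, M ⪰ 0` and `P M = 0`, then `(P + M)² = (P - M)²`, so `|P - M| = P + M` and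
`‖P - M‖₁ = tr P + tr M`. Conversely, let `Qp`, `Qn` be the spectral projections of `P - M` onto
`(0, ∞)` and `(-∞, 0]`. Then `|P - M| = (Qp - Qn)(P - M)`, whence
`tr P + tr M - ‖P - M‖₁ = 2 (tr (P Qn) + tr (Qp M))`. Both traces are traces of products of PSD
matrices, hence nonnegative and zero only if the product is, so equality forces `P Qn = 0 = Qp M`
and `P M = P (Qp + Qn) M = 0`. Since `E` is positive and trace preserving,
`‖E Δ₊ - E Δ₋‖₁ = ‖Δ‖₁ = tr Δ₊ + tr Δ₋ = tr E Δ₊ + tr E Δ₋`, so the converse applies to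
`E Δ₊` and `E Δ₋`.
-/

section

open scoped MatrixOrder

namespace Matrix.PosSemidef
variable {n 𝕜 : Type*} [Fintype n] [DecidableEq n] [RCLike 𝕜] {A B : Matrix n n 𝕜}

lemma trace_mul_eq_trace_conjTranspose_mul_self (hA : A.PosSemidef) (hB : B.PosSemidef) :
    (A * B).trace = ((CFC.sqrt A * CFC.sqrt B)ᴴ * (CFC.sqrt A * CFC.sqrt B)).trace := by
  have hsA : (CFC.sqrt A)ᴴ = CFC.sqrt A := (CFC.sqrt_nonneg A).posSemidef.1
  have hsB : (CFC.sqrt B)ᴴ = CFC.sqrt B := (CFC.sqrt_nonneg B).posSemidef.1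
  conv_lhs => rw [← CFC.sqrt_mul_sqrt_self A hA.nonneg, ← CFC.sqrt_mul_sqrt_self B hB.nonneg]
  rw [conjTranspose_mul, hsA, hsB, ← mul_assoc, trace_mul_cycle]
  simp only [mul_assoc]

lemma trace_mul_nonneg (hA : A.PosSemidef) (hB : B.PosSemidef) : 0 ≤ (A * B).trace := by
  rw [hA.trace_mul_eq_trace_conjTranspose_mul_self hB]
  exact (posSemidef_conjTranspose_mul_self _).trace_nonneg

lemma trace_mul_eq_zero_iff (hA : A.PosSemidef) (hB : B.PosSemidef) :
    (A * B).trace = 0 ↔ A * B = 0 := by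
  refine ⟨fun h => ?_, fun h => by rw [h, trace_zero]⟩
  rw [hA.trace_mul_eq_trace_conjTranspose_mul_self hB,
    trace_conjTranspose_mul_self_eq_zero_iff] at h
  calc A * B = CFC.sqrt A * (CFC.sqrt A * CFC.sqrt B) * CFC.sqrt B := by
        conv_lhs => rw [← CFC.sqrt_mul_sqrt_self A hA.nonneg, ← CFC.sqrt_mul_sqrt_self B hB.nonneg]
        simp only [mul_assoc]
    _ = 0 := by rw [h, mul_zero, zero_mul]

end Matrix.PosSemidef

lemma Matrix.IsHermitian.exists_spectral_projections {n 𝕜 : Type*} [Fintype n] [DecidableEq n]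
    [RCLike 𝕜] {H : Matrix n n 𝕜} (hH : H.IsHermitian) :
    ∃ Qp Qn : Matrix n n 𝕜, Qp.PosSemidef ∧ Qn.PosSemidef ∧ Qp + Qn = 1 ∧
      ((Qp - Qn) * H).PosSemidef ∧ (Qp - Qn) * H * ((Qp - Qn) * H) = H * H := by
  have hcont (f : ℝ → ℝ) : ContinuousOn f (spectrum ℝ H) := H.finite_real_spectrum.continuousOn f
  set χp : ℝ → ℝ := (Set.Ioi 0).indicator 1
  set χn : ℝ → ℝ := (Set.Iic 0).indicator 1
  have habs : (cfc χp H - cfc χn H) * H = cfc (fun x : ℝ => |x|) H := by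
    have : (fun x : ℝ => |x|) = fun x : ℝ => (χp x - χn x) * x := by
      funext x
      by_cases hx : 0 < x
      · simp [χp, χn, hx, abs_of_pos hx]
      · have hx' : x ≤ 0 := not_lt.mp hx
        simp [χp, χn, hx, hx', abs_of_nonpos hx']
    rw [this, cfc_mul _ _ _ (hcont _) (hcont _), cfc_sub _ _ _ (hcont _) (hcont _), cfc_id' ℝ H]
  refine ⟨cfc χp H, cfc χn H, ?_, ?_, ?_, ?_, ?_⟩
  · exact (cfc_nonneg fun x _ => Set.indicator_nonneg (fun _ _ => zero_le_one) x).posSemidef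
  · exact (cfc_nonneg fun x _ => Set.indicator_nonneg (fun _ _ => zero_le_one) x).posSemidef
  · rw [← cfc_add _ _ _ (hcont _) (hcont _), ← cfc_one ℝ H]
    congr 1
    funext x
    by_cases hx : 0 < x <;> simp [χp, χn, hx, not_lt.mp]
  · rw [habs]; exact (cfc_nonneg fun x _ => abs_nonneg x).posSemidef
  · rw [habs, ← cfc_mul _ _ _ (hcont _) (hcont _)]
    simp only [abs_mul_abs_self]
    rw [cfc_mul _ _ _ (hcont _) (hcont _), cfc_id' ℝ H]

lemma Matrix.PosSemidef.sqrt_eq_cfcSqrt {n : Type*} [Fintype n] [DecidableEq n]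
    {A : Matrix n n ℂ} (hA : A.PosSemidef) : hA.sqrt = CFC.sqrt A := by
  rw [CFC.sqrt_eq_cfc, cfc_nnreal_eq_real _ A, hA.1.cfc_eq, IsHermitian.cfc,
    Unitary.conjStarAlgAut_apply, Matrix.PosSemidef.sqrt]
  congr 3
  funext x
  simp only [Function.comp_apply, Complex.coe_algebraMap, RCLike.ofReal]
  rw [Real.sqrt]

variable {n : ℕ}

lemma traceNorm_eq_re_trace {A S : Matrix (Fin n) (Fin n) ℂ} (hS : S.PosSemidef)
    (h : S * S = Aᴴ * A) : traceNorm A = S.trace.re := by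
  rw [traceNorm, PosSemidef.sqrt_eq_cfcSqrt, CFC.sqrt_unique h hS.nonneg]

lemma traceNorm_sub_of_mul_eq_zero {P M : Matrix (Fin n) (Fin n) ℂ} (hP : P.PosSemidef)
    (hM : M.PosSemidef) (h : P * M = 0) :
    traceNorm (P - M) = P.trace.re + M.trace.re := by
  have hMP : M * P = 0 := by rw [← hP.1.eq, ← hM.1.eq, ← conjTranspose_mul, h, conjTranspose_zero]
  have hsq : (P + M) * (P + M) = (P - M)ᴴ * (P - M) := by
    rw [conjTranspose_sub, hP.1.eq, hM.1.eq]
    simp only [add_mul, mul_add, sub_mul, mul_sub, h, hMP, add_zero, sub_zero, zero_add, zero_sub]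
    abel
  rw [traceNorm_eq_re_trace (hP.add hM) hsq, trace_add, Complex.add_re]

lemma mul_eq_zero_of_traceNorm_sub {P M : Matrix (Fin n) (Fin n) ℂ} (hP : P.PosSemidef)
    (hM : M.PosSemidef) (h : traceNorm (P - M) = P.trace.re + M.trace.re) : P * M = 0 := by
  have hH : (P - M).IsHermitian := hP.1.sub hM.1
  obtain ⟨Qp, Qn, hQp, hQn, hsum, habs, hsq⟩ := hH.exists_spectral_projections
  rw [traceNorm_eq_re_trace habs (by rw [hH.eq]; exact hsq)] at h
  have hdefect : P.trace + M.trace - ((Qp - Qn) * (P - M)).trace =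
      2 * ((P * Qn).trace + (Qp * M).trace) := by
    have hP' : P.trace = (Qp * P).trace + (Qn * P).trace := by
      rw [← trace_add, ← add_mul, hsum, one_mul]
    have hM' : M.trace = (Qp * M).trace + (Qn * M).trace := by
      rw [← trace_add, ← add_mul, hsum, one_mul]
    rw [hP', hM', sub_mul, mul_sub, mul_sub, trace_sub, trace_sub, trace_sub,
      trace_mul_comm Qn P]
    ring
  have hPQn := hP.trace_mul_nonneg hQn
  have hQpM := hQp.trace_mul_nonneg hM
  have hzero : (P * Qn).trace + (Qp * M).trace = 0 := by
    refine Complex.ext ?_ (Complex.nonneg_iff.1 (add_nonneg hPQn hQpM)).2.symm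
    have := congrArg Complex.re hdefect
    simp only [Complex.sub_re, Complex.add_re, Complex.mul_re, Complex.re_ofNat, Complex.im_ofNat,
      zero_mul, sub_zero, Complex.zero_re] at this ⊢
    linarith
  obtain ⟨hPQn, hQpM⟩ := (add_eq_zero_iff_of_nonneg hPQn hQpM).1 hzero
  rw [hP.trace_mul_eq_zero_iff hQn] at hPQn
  rw [hQp.trace_mul_eq_zero_iff hM] at hQpM
  calc P * M = P * (Qp * M) + P * Qn * M := by
        rw [mul_assoc P Qn M, ← mul_add, ← add_mul, hsum, one_mul]
    _ = 0 := by rw [hQpM, hPQn, mul_zero, zero_mul, add_zero]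

theorem traceNorm_sub_eq_iff_mul_eq_zero {P M : Matrix (Fin n) (Fin n) ℂ} (hP : P.PosSemidef)
    (hM : M.PosSemidef) : traceNorm (P - M) = P.trace.re + M.trace.re ↔ P * M = 0 :=
  ⟨mul_eq_zero_of_traceNorm_sub hP hM, traceNorm_sub_of_mul_eq_zero hP hM⟩

end

/-- If a trace-preserving positive map preserves the trace norm of a Hermitian
matrix `Δ = Δ₊ − Δ₋` (with `Δ₊, Δ₋` PSD with disjoint supports), then the images
`E(Δ₊)` and `E(Δ₋)` have disjoint supports. -/
theorem preserved_implies_disjoint_supports {n : ℕ}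
    (E : Matrix (Fin n) (Fin n) ℂ →ₗ[ℂ] Matrix (Fin n) (Fin n) ℂ)
    (hTP : TracePreserving E) (hPos : PositiveMap E)
    (Δ Δp Δm : Matrix (Fin n) (Fin n) ℂ)
    (hΔp : Δp.PosSemidef) (hΔm : Δm.PosSemidef)
    (hdisj : Δp * Δm = 0) (hΔ : Δ = Δp - Δm)
    (hnorm : traceNorm (E Δ) = traceNorm Δ) :
    (E Δp) * (E Δm) = 0 := by
  have hE : traceNorm (E Δp - E Δm) = (E Δp).trace.re + (E Δm).trace.re := by
    rw [← map_sub, ← hΔ, hnorm, hΔ, (traceNorm_sub_eq_iff_mul_eq_zero hΔp hΔm).2 hdisj, hTP, hTP]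
  exact (traceNorm_sub_eq_iff_mul_eq_zero (hPos Δp hΔp) (hPos Δm hΔm)).1 hE
end

section
/- Let E be a trace-preserving completely positive map on M_n(ℂ) with Kraus operators {K_i} (so E(ρ) = Σᵢ K_i ρ K_i†, Σᵢ K_i† K_i = 1), and suppose E has a fixed point ρ₀ that is positive definite. Then a matrix X satisfies E†(X) = X (where E†(X) = Σᵢ K_i† X K_i) if and only if [X, K_i] = 0 for all i. -/
open Matrix
open scoped ComplexOrder

/-!
Write `E = krausMap K` and `E† = krausAdjoint K`. With `Cᵢ = Kᵢ X - X Kᵢ` and `Σ Kᵢᴴ Kᵢ = 1`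
one has the algebraic identity `Σ Cᵢᴴ Cᵢ = E†(Xᴴ X) - E†(Xᴴ) X - Xᴴ E†(X) + Xᴴ X`.
If `E†(X) = X` then also `E†(Xᴴ) = Xᴴ`, so the right side is `E†(Xᴴ X) - Xᴴ X`, and pairing
with `ρ₀` kills it by duality: `tr (ρ₀ E†(Y)) = tr (E(ρ₀) Y) = tr (ρ₀ Y)`. Hence
`Σ tr (Cᵢ ρ₀ Cᵢᴴ) = 0`, a sum of traces of positive semidefinite matrices, and as `ρ₀` is
positive definite every `Cᵢ` vanishes.
-/

namespace Matrix

variable {n ι : Type*} [Fintype n] [Fintype ι]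

def krausMap {R : Type*} [Semiring R] [StarRing R] (K : ι → Matrix n n R) (ρ : Matrix n n R) :
    Matrix n n R :=
  ∑ i, K i * ρ * (K i)ᴴ

def krausAdjoint {R : Type*} [Semiring R] [StarRing R] (K : ι → Matrix n n R) (X : Matrix n n R) :
    Matrix n n R :=
  ∑ i, (K i)ᴴ * X * K i

section Ring

variable {R : Type*} [Ring R] [StarRing R] (K : ι → Matrix n n R)

lemma conjTranspose_krausAdjoint (X : Matrix n n R) :
    (krausAdjoint K X)ᴴ = krausAdjoint K Xᴴ := by
  simp [krausAdjoint, conjTranspose_sum, mul_assoc]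

lemma krausAdjoint_eq_self_of_commute [DecidableEq n] (hTP : ∑ i, (K i)ᴴ * K i = 1)
    {X : Matrix n n R} (hX : ∀ i, X * K i = K i * X) : krausAdjoint K X = X := by
  calc krausAdjoint K X = ∑ i, (K i)ᴴ * K i * X :=
        Finset.sum_congr rfl fun i _ => by rw [mul_assoc, hX, ← mul_assoc]
    _ = X := by rw [← Finset.sum_mul, hTP, one_mul]

lemma sum_conjTranspose_commutator_mul_commutator [DecidableEq n]
    (hTP : ∑ i, (K i)ᴴ * K i = 1) (X : Matrix n n R) :
    ∑ i, (K i * X - X * K i)ᴴ * (K i * X - X * K i) =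
      krausAdjoint K (Xᴴ * X) - krausAdjoint K Xᴴ * X - Xᴴ * krausAdjoint K X + Xᴴ * X := by
  calc _ = ∑ i, ((K i)ᴴ * (Xᴴ * X) * K i - (K i)ᴴ * Xᴴ * K i * X
        - Xᴴ * ((K i)ᴴ * X * K i) + Xᴴ * ((K i)ᴴ * K i) * X) :=
        Finset.sum_congr rfl fun i _ => by
          simp only [conjTranspose_sub, conjTranspose_mul]
          noncomm_ring
    _ = _ := by
      simp only [Finset.sum_add_distrib, Finset.sum_sub_distrib, ← Finset.sum_mul,
        ← Finset.mul_sum, hTP, krausAdjoint, mul_one]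

end Ring

lemma trace_mul_krausAdjoint {R : Type*} [CommRing R] [StarRing R] (K : ι → Matrix n n R)
    (ρ Y : Matrix n n R) : trace (ρ * krausAdjoint K Y) = trace (krausMap K ρ * Y) := by
  simp only [krausAdjoint, krausMap, Finset.mul_sum, Finset.sum_mul, trace_sum]
  refine Finset.sum_congr rfl fun i _ => ?_
  rw [← mul_assoc, ← mul_assoc, trace_mul_comm]
  simp only [mul_assoc]

section RCLike

variable {m 𝕜 : Type*} [Fintype m] [RCLike 𝕜] {ρ : Matrix n n 𝕜}

lemma PosDef.eq_zero_of_mul_mul_conjTranspose_eq_zero (hρ : ρ.PosDef) {C : Matrix m n 𝕜}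
    (hC : C * ρ * Cᴴ = 0) : C = 0 := by
  rw [← conjTranspose_eq_zero, ext_iff_mulVec]
  intro x
  rw [zero_mulVec]
  by_contra hx
  have := hρ.dotProduct_mulVec_pos hx
  rw [star_mulVec, conjTranspose_conjTranspose, dotProduct_mulVec, vecMul_vecMul,
    dotProduct_mulVec, vecMul_vecMul, hC, vecMul_zero, zero_dotProduct] at this
  exact this.false

lemma PosDef.eq_zero_of_trace_mul_sum_conjTranspose_mul_self_eq_zero (hρ : ρ.PosDef)
    {C : ι → Matrix m n 𝕜} (h : trace (ρ * ∑ i, (C i)ᴴ * C i) = 0) (i : ι) : C i = 0 := by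
  have hpsd : ∀ i, (C i * ρ * (C i)ᴴ).PosSemidef := fun i =>
    hρ.posSemidef.mul_mul_conjTranspose_same (C i)
  have hterm : ∀ i, trace (ρ * ((C i)ᴴ * C i)) = trace (C i * ρ * (C i)ᴴ) := fun i => by
    rw [← Matrix.mul_assoc, trace_mul_comm, Matrix.mul_assoc]
  simp only [Finset.mul_sum, trace_sum, hterm] at h
  have := (Finset.sum_eq_zero_iff_of_nonneg fun i _ => (hpsd i).trace_nonneg).1 h i
    (Finset.mem_univ i)
  exact hρ.eq_zero_of_mul_mul_conjTranspose_eq_zero (((hpsd i).trace_eq_zero_iff).1 this)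

end RCLike

end Matrix

/-- For a CPTP map `E(ρ) = Σᵢ Kᵢ ρ Kᵢᴴ` with a positive definite fixed point
`ρ₀`, a matrix `X` is fixed by the adjoint map `E†(X) = Σᵢ Kᵢᴴ X Kᵢ` iff `X`
commutes with every Kraus operator. -/
theorem fixed_points_of_adjoint_iff_commutant {n k : ℕ}
    (K : Fin k → Matrix (Fin n) (Fin n) ℂ)
    (hTP : ∑ i, (K i)ᴴ * K i = 1)
    (ρ₀ : Matrix (Fin n) (Fin n) ℂ) (hρ₀ : ρ₀.PosDef)
    (hfix : ∑ i, K i * ρ₀ * (K i)ᴴ = ρ₀)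
    (X : Matrix (Fin n) (Fin n) ℂ) :
    (∑ i, (K i)ᴴ * X * K i = X) ↔ ∀ i, X * K i = K i * X := by
  change krausAdjoint K X = X ↔ _
  refine ⟨fun hX i => ?_, krausAdjoint_eq_self_of_commute K hTP⟩
  have hXH : krausAdjoint K Xᴴ = Xᴴ := by rw [← conjTranspose_krausAdjoint, hX]
  have hdefect : trace (ρ₀ * ∑ i, (K i * X - X * K i)ᴴ * (K i * X - X * K i)) = 0 := by
    rw [sum_conjTranspose_commutator_mul_commutator K hTP, hX, hXH, sub_add_cancel, mul_sub,
      trace_sub, trace_mul_krausAdjoint, krausMap, hfix, sub_self]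
  exact (sub_eq_zero.1 (hρ₀.eq_zero_of_trace_mul_sum_conjTranspose_mul_self_eq_zero hdefect i)).symm
end

section
/- Let {A_i}, {D_i} be finite families of matrices (A_i: P → P, D_i: P^⊥ → P) satisfying Σᵢ A_i† D_i = 0. Then for every matrix ρ_C ≥ 0 on P^⊥ and every matrix σ: P^⊥ → P, if Σᵢ D_i ρ_C D_i† = −Σᵢ (A_i σ D_i† + D_i σ† A_i†), then Σᵢ D_i ρ_C D_i† = 0; if additionally ρ_C is positive definite, then D_i = 0 for all i. -/
open Matrix
open scoped ComplexOrder

/-! The cross terms `Aᵢ σ Dᵢᴴ + Dᵢ σᴴ Aᵢᴴ` have total trace `tr (σ Σ Dᵢᴴ Aᵢ) + tr (σᴴ Σ Aᵢᴴ Dᵢ) = 0`,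
so the positive semidefinite matrix `Σᵢ Dᵢ ρ Dᵢᴴ` has trace zero and vanishes. Its summands are
positive semidefinite too, hence each `Dᵢ ρ Dᵢᴴ` vanishes, which forces `Dᵢ = 0` when `ρ` is
positive definite. -/

namespace Matrix

lemma trace_sum_mul_mul {ι l m n R : Type*} [Fintype ι] [Fintype l] [Fintype m] [Fintype n]
    [CommSemiring R] (X : ι → Matrix m l R) (τ : Matrix l n R) (Z : ι → Matrix n m R) :
    trace (∑ i, X i * τ * Z i) = trace (τ * ∑ i, Z i * X i) := by
  simp only [trace_sum, Matrix.mul_sum]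
  exact Finset.sum_congr rfl fun i _ ↦ by rw [Matrix.mul_assoc, trace_mul_comm, Matrix.mul_assoc]

lemma PosSemidef.eq_zero_of_sum_eq_zero {ι n 𝕜 : Type*} [Fintype ι] [Fintype n] [RCLike 𝕜]
    {M : ι → Matrix n n 𝕜} (hM : ∀ i, (M i).PosSemidef) (hsum : ∑ i, M i = 0) (i : ι) :
    M i = 0 := by
  open scoped MatrixOrder in
  exact (Finset.sum_eq_zero_iff_of_nonneg fun j _ ↦ (hM j).nonneg).mp hsum i (Finset.mem_univ i)

lemma PosDef.eq_zero_of_mul_mul_conjTranspose_eq_zero_s14 {m n R : Type*} [Fintype m] [Fintype n]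
    [CommRing R] [PartialOrder R] [StarRing R] {ρ : Matrix n n R} (hρ : ρ.PosDef)
    {B : Matrix m n R} (h : B * ρ * Bᴴ = 0) : B = 0 := by
  classical
  suffices ∀ x, Bᴴ *ᵥ x = 0 by
    rw [← conjTranspose_eq_zero]
    ext i j
    simpa using congrFun (this (Pi.single j 1)) i
  intro x
  by_contra hx
  have := hρ.dotProduct_mulVec_pos hx
  simp only [star_mulVec, dotProduct_mulVec, vecMul_vecMul, conjTranspose_conjTranspose] at this
  simp [h] at this

end Matrix

/-- If `Σᵢ Aᵢᴴ Dᵢ = 0`, then for every PSD `ρ_C` and every `σ`, the identity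
`Σᵢ Dᵢ ρ_C Dᵢᴴ = −Σᵢ (Aᵢ σ Dᵢᴴ + Dᵢ σᴴ Aᵢᴴ)` forces `Σᵢ Dᵢ ρ_C Dᵢᴴ = 0`;
and if moreover `ρ_C` is positive definite, then every `Dᵢ = 0`. -/
theorem interference_term_vanishes {p q k : ℕ}
    (A : Fin k → Matrix (Fin p) (Fin p) ℂ)
    (D : Fin k → Matrix (Fin p) (Fin q) ℂ)
    (horth : ∑ i, (A i)ᴴ * D i = 0)
    (ρC : Matrix (Fin q) (Fin q) ℂ) (hρC : ρC.PosSemidef)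
    (σ : Matrix (Fin p) (Fin q) ℂ)
    (heq : ∑ i, D i * ρC * (D i)ᴴ =
      -∑ i, (A i * σ * (D i)ᴴ + D i * σᴴ * (A i)ᴴ)) :
    (∑ i, D i * ρC * (D i)ᴴ = 0) ∧
    (ρC.PosDef → ∀ i, D i = 0) := by
  have horth' : ∑ i, (D i)ᴴ * A i = 0 := by
    simpa [conjTranspose_sum] using congrArg conjTranspose horth
  have hterm : ∀ i, (D i * ρC * (D i)ᴴ).PosSemidef := fun i ↦ hρC.mul_mul_conjTranspose_same (D i)
  have htrace : trace (∑ i, D i * ρC * (D i)ᴴ) = 0 := by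
    rw [heq, trace_neg, Finset.sum_add_distrib, trace_add, trace_sum_mul_mul (R := ℂ),
      trace_sum_mul_mul (R := ℂ), horth', horth]
    simp
  have hsum : ∑ i, D i * ρC * (D i)ᴴ = 0 :=
    (posSemidef_sum _ fun i _ ↦ hterm i).trace_eq_zero_iff.mp htrace
  exact ⟨hsum, fun hρC' i ↦
    hρC'.eq_zero_of_mul_mul_conjTranspose_eq_zero_s14 (PosSemidef.eq_zero_of_sum_eq_zero hterm hsum i)⟩
end
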